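/- arXiv:1711.03063 — 6 statements merged into one kernel-verified Lean document; each statement's English description precedes it below -/
import Mathlib

section
/- Let K be a category with an initial object I and a terminal object F, and let (E,M) be a factorization system on K. Let Min be the middle object of the (E,M)-factorization of the unique morphism I → F. Then Min is (E,M)-minimal in K: for every object X of K, Min (E,M)-divides X, i.e., there exist an object Z of K, a morphism Z → X belonging to M, and a morphism Z → Min belonging to E. -/
open CategoryTheory CategoryTheory.Limits

universe v u

/-- A factorization system `(E, M)` on a category `K`: both classes contain all isomorphisms
and are closed under composition, every morphism factors as an `E`-morphism followed by an
`M`-morphism (with a chosen middle object `mid f`), and unique diagonal fill-ins exist. -/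
structure FactorizationSystem (K : Type u) [Category.{v} K] where
  E : MorphismProperty K
  M : MorphismProperty K
  E_iso : ∀ {X Y : K} (f : X ⟶ Y), IsIso f → E f
  M_iso : ∀ {X Y : K} (f : X ⟶ Y), IsIso f → M f
  E_comp : ∀ {X Y Z : K} (f : X ⟶ Y) (g : Y ⟶ Z), E f → E g → E (f ≫ g)
  M_comp : ∀ {X Y Z : K} (f : X ⟶ Y) (g : Y ⟶ Z), M f → M g → M (f ≫ g)
  mid : ∀ {X Y : K}, (X ⟶ Y) → K
  e : ∀ {X Y : K} (f : X ⟶ Y), X ⟶ mid f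
  m : ∀ {X Y : K} (f : X ⟶ Y), mid f ⟶ Y
  e_mem : ∀ {X Y : K} (f : X ⟶ Y), E (e f)
  m_mem : ∀ {X Y : K} (f : X ⟶ Y), M (m f)
  fac : ∀ {X Y : K} (f : X ⟶ Y), e f ≫ m f = f
  diagonal : ∀ {X Y X' Y' : K} (u : X ⟶ Y) (v : X' ⟶ Y') (f : X ⟶ X') (g : Y ⟶ Y'),
    E u → M v → u ≫ g = f ≫ v → ∃! d : Y ⟶ X', u ≫ d = f ∧ d ≫ v = g

/-! Factor the unique `⊥_ K ⟶ X` as `⊥_ K ⟶ Z ⟶ X` with `Z ⟶ X` in `M`. The square formed by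
`⊥_ K ⟶ Z` (in `E`) and `Min ⟶ ⊤_ K` (in `M`) commutes because its corners are initial and
terminal, and its diagonal `Z ⟶ Min` lies in `E` because `E` is left cancellable. -/

namespace FactorizationSystem

variable {K : Type u} [Category.{v} K] (FS : FactorizationSystem K)

theorem hom_ext_of_E_of_M {A B C D : K} {u : A ⟶ B} {v : C ⟶ D} (hu : FS.E u) (hv : FS.M v)
    {d₁ d₂ : B ⟶ C} (h₁ : u ≫ d₁ = u ≫ d₂) (h₂ : d₁ ≫ v = d₂ ≫ v) : d₁ = d₂ := by
  obtain ⟨_, -, huniq⟩ := FS.diagonal u v (u ≫ d₁) (d₁ ≫ v) hu hv (by simp)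
  exact (huniq d₁ ⟨rfl, rfl⟩).trans (huniq d₂ ⟨h₁.symm, h₂.symm⟩).symm

theorem E_of_precomp {A B C : K} (f : A ⟶ B) (g : B ⟶ C) (hf : FS.E f) (hfg : FS.E (f ≫ g)) :
    FS.E g := by
  -- The diagonal of the square `(f ≫ g) ≫ 𝟙 = (f ≫ e g) ≫ m g` is an inverse of `m g`.
  obtain ⟨d, ⟨hd, hdm⟩, -⟩ := FS.diagonal (f ≫ g) (FS.m g) (f ≫ FS.e g) (𝟙 C)
    hfg (FS.m_mem g) (by rw [Category.comp_id, Category.assoc, FS.fac])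
  have hmd : FS.m g ≫ d = 𝟙 _ :=
    FS.hom_ext_of_E_of_M (FS.E_comp _ _ hf (FS.e_mem g)) (FS.m_mem g)
      (by rw [Category.assoc, ← Category.assoc (FS.e g), FS.fac, ← Category.assoc, hd,
        Category.comp_id])
      (by rw [Category.assoc, hdm, Category.comp_id, Category.id_comp])
  have : IsIso (FS.m g) := ⟨d, hmd, hdm⟩
  rw [← FS.fac g]
  exact FS.E_comp _ _ (FS.e_mem g) (FS.E_iso _ this)

end FactorizationSystem

/-- `Min`, the middle object of the `(E,M)`-factorization of the unique morphism from the
initial to the terminal object, is `(E,M)`-minimal: it `(E,M)`-divides every object `X`,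
i.e. it is an `E`-quotient of an `M`-subobject of `X`. -/
theorem minimal_divides_every_object (K : Type u) [Category.{v} K]
    [HasInitial K] [HasTerminal K] (FS : FactorizationSystem K) (X : K) :
    ∃ (Z : K) (mm : Z ⟶ X) (ee : Z ⟶ FS.mid (initial.to (⊤_ K) : (⊥_ K) ⟶ ⊤_ K)),
      FS.M mm ∧ FS.E ee := by
  obtain ⟨d, ⟨hd, -⟩, -⟩ := FS.diagonal (FS.e (initial.to X)) (FS.m (initial.to (⊤_ K)))
    (FS.e (initial.to (⊤_ K))) (terminal.from _) (FS.e_mem _) (FS.m_mem _) (initial.hom_ext _ _)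
  exact ⟨_, FS.m (initial.to X), d, FS.m_mem _,
    FS.E_of_precomp _ d (FS.e_mem _) (hd ▸ FS.e_mem _)⟩
end

section
/- Let K be a category with an initial object I and a terminal object F, and let (E,M) be a factorization system on K. Let Min be the middle object of the (E,M)-factorization of the unique morphism I → F; for an object X let Reach(X) be the middle object of the factorization of the unique morphism I → X and Obs(X) the middle object of the factorization of the unique morphism X → F. Then for every object X of K, Min is isomorphic to Obs(Reach(X)) and Min is isomorphic to Reach(Obs(X)). -/
/-! Composing `I ⟶ Reach X` (in `E`) with the `E`-part of `Reach X ⟶ F` gives an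
`(E, M)`-factorization of `I ⟶ F` through `Obs (Reach X)`; dually, `Reach (Obs X)` is the middle
object of a factorization whose `M`-part is `Reach (Obs X) ⟶ Obs X ⟶ F`. Since all morphisms
`I ⟶ F` agree and `(E, M)`-factorizations are unique up to isomorphism, both are `Min`. -/

open CategoryTheory CategoryTheory.Limits

universe v u

variable {K : Type u} [Category.{v} K]

/-- `Reach X`: the middle object of the factorization of the unique morphism `I ⟶ X`. -/
noncomputable def FactorizationSystem.Reach [HasInitial K] (FS : FactorizationSystem K)
    (X : K) : K := FS.mid (initial.to X)

/-- `Obs X`: the middle object of the factorization of the unique morphism `X ⟶ F`. -/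
noncomputable def FactorizationSystem.Obs [HasTerminal K] (FS : FactorizationSystem K)
    (X : K) : K := FS.mid (terminal.from X)

namespace FactorizationSystem

variable (FS : FactorizationSystem K)

theorem eq_id_of_comp_eq {X Y Z : K} {e : X ⟶ Z} {m : Z ⟶ Y} (he : FS.E e) (hm : FS.M m)
    {d : Z ⟶ Z} (hed : e ≫ d = e) (hdm : d ≫ m = m) : d = 𝟙 Z :=
  (FS.diagonal e m e m he hm rfl).unique ⟨hed, hdm⟩ ⟨Category.comp_id e, Category.id_comp m⟩

theorem nonempty_iso_of_fac {X Y Z₁ Z₂ : K} {e₁ : X ⟶ Z₁} {m₁ : Z₁ ⟶ Y} {e₂ : X ⟶ Z₂}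
    {m₂ : Z₂ ⟶ Y} (he₁ : FS.E e₁) (hm₁ : FS.M m₁) (he₂ : FS.E e₂) (hm₂ : FS.M m₂)
    (h : e₁ ≫ m₁ = e₂ ≫ m₂) : Nonempty (Z₁ ≅ Z₂) := by
  obtain ⟨d, ⟨hed, hdm⟩, -⟩ := FS.diagonal e₁ m₂ e₂ m₁ he₁ hm₂ h
  obtain ⟨d', ⟨hed', hdm'⟩, -⟩ := FS.diagonal e₂ m₁ e₁ m₂ he₂ hm₁ h.symm
  refine ⟨⟨d, d', FS.eq_id_of_comp_eq he₁ hm₁ ?_ ?_, FS.eq_id_of_comp_eq he₂ hm₂ ?_ ?_⟩⟩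
  · rw [← Category.assoc, hed, hed']
  · rw [Category.assoc, hdm', hdm]
  · rw [← Category.assoc, hed', hed]
  · rw [Category.assoc, hdm, hdm']

theorem nonempty_mid_iso_of_fac {X Y Z : K} {f : X ⟶ Y} {e : X ⟶ Z} {m : Z ⟶ Y}
    (he : FS.E e) (hm : FS.M m) (hf : e ≫ m = f) : Nonempty (FS.mid f ≅ Z) :=
  FS.nonempty_iso_of_fac (FS.e_mem f) (FS.m_mem f) he hm (by rw [FS.fac, hf])

end FactorizationSystem

/-- For every object `X`, the minimal object `Min` (the middle object of the factorization
of the unique morphism from the initial to the terminal object) is isomorphic to both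
`Obs (Reach X)` and `Reach (Obs X)`. -/
theorem min_iso_obs_reach_and_reach_obs [HasInitial K] [HasTerminal K]
    (FS : FactorizationSystem K) (X : K) :
    Nonempty (FS.mid (initial.to (⊤_ K) : (⊥_ K) ⟶ ⊤_ K) ≅ FS.Obs (FS.Reach X)) ∧
    Nonempty (FS.mid (initial.to (⊤_ K) : (⊥_ K) ⟶ ⊤_ K) ≅ FS.Reach (FS.Obs X)) :=
  ⟨FS.nonempty_mid_iso_of_fac (FS.E_comp _ _ (FS.e_mem _) (FS.e_mem _)) (FS.m_mem _)
      (initial.hom_ext _ _),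
    FS.nonempty_mid_iso_of_fac (FS.e_mem _) (FS.M_comp _ _ (FS.m_mem _) (FS.m_mem _))
      (initial.hom_ext _ _)⟩
end

section
/- Let C be a category with a factorization system (E,M), let A be an alphabet, and let L : O_A → C be a C-language. Define E_Aut to be the class of morphisms of Auto(L) all of whose components (as natural transformations of functors I_A → C) belong to E, and M_Aut the class of morphisms of Auto(L) all of whose components belong to M. Then (E_Aut, M_Aut) is a factorization system on Auto(L). -/
open CategoryTheory CategoryTheory.Limits

universe v u

/-! ### The input category `I_A` of word automata -/

inductive WObj (A : Type) : Type where
  | left | center | right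

inductive WEdge {A : Type} : WObj A → WObj A → Type where
  | tri : WEdge WObj.left WObj.center
  | letter (a : A) : WEdge WObj.center WObj.center
  | tril : WEdge WObj.center WObj.right

instance (A : Type) : Quiver (WObj A) := ⟨WEdge⟩

/-- `I_A`: the free category on the graph `left -▷→ center -a→ center -◁→ right`. -/
def IA (A : Type) : Type := Paths (WObj A)

instance (A : Type) : Category (IA A) :=
  inferInstanceAs (Category (Paths (WObj A)))

def IA.l (A : Type) : IA A := WObj.left
def IA.c (A : Type) : IA A := WObj.center
def IA.r (A : Type) : IA A := WObj.right

/-- The generating morphism `▷ : left ⟶ center`. -/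
def IA.tri (A : Type) : IA.l A ⟶ IA.c A := Quiver.Hom.toPath WEdge.tri
/-- The generating morphism `a : center ⟶ center` for a letter `a`. -/
def IA.letter {A : Type} (a : A) : IA.c A ⟶ IA.c A := Quiver.Hom.toPath (WEdge.letter a)
/-- The generating morphism `◁ : center ⟶ right`. -/
def IA.tril (A : Type) : IA.c A ⟶ IA.r A := Quiver.Hom.toPath WEdge.tril

/-- The word spelled by a path in the graph (the sequence of `letter` edges used). -/
def toWord {A : Type} : ∀ {X Y : WObj A}, Quiver.Path X Y → List A
  | _, _, Quiver.Path.nil => []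
  | _, _, Quiver.Path.cons p e =>
      toWord p ++ (match e with
        | WEdge.letter a => [a]
        | _ => [])

/-- The path `center → center` spelling a word `w`. -/
def pathCC {A : Type} : List A → ((IA.c A) ⟶ (IA.c A))
  | [] => Quiver.Path.nil
  | a :: w => (Quiver.Hom.toPath (WEdge.letter a)).comp (pathCC w)

/-- The path `▷ w ◁ : left ⟶ right` spelling a word `w`. -/
def pathLR {A : Type} (w : List A) : (IA.l A) ⟶ (IA.r A) :=
  IA.tri A ≫ pathCC w ≫ IA.tril A

theorem path_from_right {A : Type} : ∀ {Z : WObj A},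
    Quiver.Path (WObj.right : WObj A) Z → Z = WObj.right
  | _, Quiver.Path.nil => rfl
  | _, Quiver.Path.cons p e => by
      have h := path_from_right p
      subst h
      exact nomatch e

theorem path_ll_nil {A : Type} (p : Quiver.Path (WObj.left : WObj A) WObj.left) :
    p = Quiver.Path.nil := by
  cases p with
  | nil => rfl
  | cons q e => exact nomatch e

theorem path_rr_nil {A : Type} (p : Quiver.Path (WObj.right : WObj A) WObj.right) :
    p = Quiver.Path.nil := by
  cases p with
  | nil => rfl
  | cons q e =>
      have h := path_from_right q
      subst h
      exact nomatch e

theorem path_rl_false {A : Type} (p : Quiver.Path (WObj.right : WObj A) WObj.left) :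
    False := by
  have := path_from_right p
  exact nomatch this

/-- `O_A`: the full subcategory of `I_A` on the objects `left` and `right`. -/
def OA (A : Type) : Type := ObjectProperty.FullSubcategory (fun X : IA A => X ≠ IA.c A)

instance (A : Type) : Category (OA A) :=
  inferInstanceAs (Category (ObjectProperty.FullSubcategory (fun X : IA A => X ≠ IA.c A)))

/-- The inclusion functor `ι : O_A ⥤ I_A`. -/
def OA.inc (A : Type) : OA A ⥤ IA A := ObjectProperty.ι _

def OA.l (A : Type) : OA A := ⟨IA.l A, fun h => nomatch (show (WObj.left : WObj A) = WObj.center from h)⟩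
def OA.r (A : Type) : OA A := ⟨IA.r A, fun h => nomatch (show (WObj.right : WObj A) = WObj.center from h)⟩

/-- The morphism `▷ w ◁ : left ⟶ right` of `O_A`. -/
def OA.word {A : Type} (w : List A) : OA.l A ⟶ OA.r A := ⟨pathLR w⟩

/-- The language `O_A ⥤ C` determined by two objects `LI`, `LO` of `C` and a function
assigning to every word `w ∈ A*` a morphism `LI ⟶ LO` (the value at `▷w◁`). -/
def mkLang {A : Type} {C : Type u} [Category.{v} C] (LI LO : C)
    (f : List A → (LI ⟶ LO)) : OA A ⥤ C where
  obj X :=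
    match X with
    | ⟨WObj.left, _⟩ => LI
    | ⟨WObj.right, _⟩ => LO
    | ⟨WObj.center, h⟩ => absurd rfl h
  map {X Y} p :=
    match X, Y, p with
    | ⟨WObj.left, _⟩, ⟨WObj.left, _⟩, _ => 𝟙 LI
    | ⟨WObj.left, _⟩, ⟨WObj.right, _⟩, p => f (toWord p.hom)
    | ⟨WObj.right, _⟩, ⟨WObj.right, _⟩, _ => 𝟙 LO
    | ⟨WObj.right, _⟩, ⟨WObj.left, _⟩, p => (path_rl_false p.hom).elim
    | ⟨WObj.center, h⟩, _, _ => absurd rfl h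
    | _, ⟨WObj.center, h⟩, _ => absurd rfl h
  map_id X := by
    rcases X with ⟨(_|_|_), hX⟩
    · rfl
    · exact absurd rfl hX
    · rfl
  map_comp {X Y Z} p q := by
    rcases p with ⟨p⟩
    rcases q with ⟨q⟩
    rcases X with ⟨(_|_|_), hX⟩ <;> rcases Y with ⟨(_|_|_), hY⟩ <;>
      rcases Z with ⟨(_|_|_), hZ⟩ <;>
      first
        | exact absurd rfl hX
        | exact absurd rfl hY
        | exact absurd rfl hZ
        | exact (path_rl_false p).elim
        | exact (path_rl_false q).elim
        | exact (Category.id_comp _).symm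
        | (have hp := path_ll_nil (p : Quiver.Path (WObj.left : WObj A) WObj.left)
           subst hp
           show f (toWord (Quiver.Path.comp Quiver.Path.nil (q : Quiver.Path (WObj.left : WObj A) WObj.right))) =
             𝟙 LI ≫ f (toWord (q : Quiver.Path (WObj.left : WObj A) WObj.right))
           exact (congrArg (fun r => f (toWord r)) (Quiver.Path.nil_comp _)).trans
             (Category.id_comp _).symm)
        | (have hq := path_rr_nil (q : Quiver.Path (WObj.right : WObj A) WObj.right)
           subst hq
           show f (toWord (Quiver.Path.comp p Quiver.Path.nil)) = f (toWord p) ≫ 𝟙 LO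
           exact (Category.comp_id _).symm)

/-- A `C`-automaton `M` accepts the `C`-language `L` when `ι ⋙ M = L`. -/
def Accepts {A : Type} {C : Type u} [Category.{v} C] (M : IA A ⥤ C) (L : OA A ⥤ C) : Prop :=
  OA.inc A ⋙ M = L

/-- The category `Auto(L)` of `C`-automata accepting the language `L`; morphisms are
natural transformations whose whiskering along `ι` is the identity of `L`. -/
def Auto (A : Type) {C : Type u} [Category.{v} C] (L : OA A ⥤ C) : Type _ :=
  { M : IA A ⥤ C // Accepts M L }

instance (A : Type) {C : Type u} [Category.{v} C] (L : OA A ⥤ C) :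
    Category (Auto A L) where
  Hom M N := { α : M.1 ⟶ N.1 //
    CategoryTheory.Functor.whiskerLeft (OA.inc A) α = eqToHom (M.2.trans N.2.symm) }
  id M := ⟨𝟙 M.1, by simp⟩
  comp {M N P} f g := ⟨f.1 ≫ g.1, by
    rw [CategoryTheory.Functor.whiskerLeft_comp, f.2, g.2, eqToHom_trans]⟩
  id_comp f := Subtype.ext (Category.id_comp _)
  comp_id f := Subtype.ext (Category.comp_id _)
  assoc f g h := Subtype.ext (Category.assoc _ _ _)

/-- The functor `St : Auto(L) ⥤ C` evaluating an automaton at the object `center`. -/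
def St (A : Type) {C : Type u} [Category.{v} C] (L : OA A ⥤ C) : Auto A L ⥤ C where
  obj M := M.1.obj (IA.c A)
  map f := f.1.app (IA.c A)
  map_id _ := rfl
  map_comp _ _ := rfl

/-- The underlying natural transformation of a morphism in `Auto(L)`. -/
def Auto.nat {A : Type} {C : Type u} [Category.{v} C] {L : OA A ⥤ C} {M N : Auto A L}
    (α : M ⟶ N) : M.1 ⟶ N.1 :=
  (show { β : M.1 ⟶ N.1 //
      CategoryTheory.Functor.whiskerLeft (OA.inc A) β = eqToHom (M.2.trans N.2.symm) } from α).1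

/-- The property that two classes of morphisms `(E, M)` form a factorization system on `K`:
both contain all isomorphisms, are closed under composition, every morphism factors as an
`E`-morphism followed by an `M`-morphism, and unique diagonal fill-ins exist. -/
structure IsFactorizationSystem (K : Type u) [Category.{v} K]
    (E M : MorphismProperty K) : Prop where
  E_iso : ∀ {X Y : K} (f : X ⟶ Y), IsIso f → E f
  M_iso : ∀ {X Y : K} (f : X ⟶ Y), IsIso f → M f
  E_comp : ∀ {X Y Z : K} (f : X ⟶ Y) (g : Y ⟶ Z), E f → E g → E (f ≫ g)
  M_comp : ∀ {X Y Z : K} (f : X ⟶ Y) (g : Y ⟶ Z), M f → M g → M (f ≫ g)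
  fac : ∀ {X Y : K} (f : X ⟶ Y), ∃ (Z : K) (e : X ⟶ Z) (m : Z ⟶ Y),
    E e ∧ M m ∧ e ≫ m = f
  diagonal : ∀ {X Y X' Y' : K} (u : X ⟶ Y) (v : X' ⟶ Y') (f : X ⟶ X') (g : Y ⟶ Y'),
    E u → M v → u ≫ g = f ≫ v → ∃! d : Y ⟶ X', u ≫ d = f ∧ d ≫ v = g

/-!
The factorization and the diagonals are built componentwise, and uniqueness of diagonal fill-ins
makes them natural: the componentwise images assemble into a functor, and the componentwise
diagonals into a natural transformation. At the boundary objects `left` and `right` every morphism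
of automata has identity (`eqToHom`) components, which are isomorphisms and hence lie in both `E`
and `M`; factoring them trivially keeps the boundary of the middle automaton equal to that of
the source, so it still accepts `L`.
-/

open MorphismProperty

namespace IsFactorizationSystem

variable {K : Type u} [Category.{v} K] {E M : MorphismProperty K}

theorem hom_ext (hEM : IsFactorizationSystem K E M) {X Y X' Y' : K} {u : X ⟶ Y} {v : X' ⟶ Y'}
    (hu : E u) (hv : M v) {d d' : Y ⟶ X'} (h₁ : u ≫ d = u ≫ d') (h₂ : d ≫ v = d' ≫ v) :
    d = d' := by
  obtain ⟨_, -, unique⟩ := hEM.diagonal u v (u ≫ d) (d ≫ v) hu hv (Category.assoc _ _ _).symm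
  exact (unique d ⟨rfl, rfl⟩).trans (unique d' ⟨h₁.symm, h₂.symm⟩).symm

noncomputable def lift (hEM : IsFactorizationSystem K E M) {X Y X' Y' : K} {u : X ⟶ Y}
    {v : X' ⟶ Y'} (hu : E u) (hv : M v) (f : X ⟶ X') (g : Y ⟶ Y') (sq : u ≫ g = f ≫ v) :
    Y ⟶ X' :=
  (hEM.diagonal u v f g hu hv sq).exists.choose

section Lift

variable (hEM : IsFactorizationSystem K E M) {X Y X' Y' : K} {u : X ⟶ Y} {v : X' ⟶ Y'}
  (hu : E u) (hv : M v) (f : X ⟶ X') (g : Y ⟶ Y') (sq : u ≫ g = f ≫ v)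

theorem fac_lift : u ≫ hEM.lift hu hv f g sq = f :=
  (hEM.diagonal u v f g hu hv sq).exists.choose_spec.1

theorem lift_fac : hEM.lift hu hv f g sq ≫ v = g :=
  (hEM.diagonal u v f g hu hv sq).exists.choose_spec.2

end Lift

theorem hasFactorization (hEM : IsFactorizationSystem K E M) : HasFactorization E M where
  nonempty_mapFactorizationData f := by
    obtain ⟨Z, e, m, he, hm, fac⟩ := hEM.fac f
    exact ⟨{ Z := Z, i := e, p := m, fac := fac, hi := he, hp := hm }⟩

def isoFactorizationData (hEM : IsFactorizationSystem K E M) {X Y : K} (f : X ⟶ Y)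
    (hf : IsIso f) : MapFactorizationData E M f where
  Z := X
  i := 𝟙 X
  p := f
  hi := hEM.E_iso _ inferInstance
  hp := hEM.M_iso f hf

variable {D : Type*} [Category* D]

theorem existsUnique_natTrans_diagonal (hEM : IsFactorizationSystem K E M)
    {F G F' G' : D ⥤ K} {u : F ⟶ G} {v : F' ⟶ G'} {f : F ⟶ F'} {g : G ⟶ G'}
    (hu : ∀ X, E (u.app X)) (hv : ∀ X, M (v.app X)) (sq : u ≫ g = f ≫ v) :
    ∃! d : G ⟶ F', u ≫ d = f ∧ d ≫ v = g := by
  have sq_app X : u.app X ≫ g.app X = f.app X ≫ v.app X := NatTrans.congr_app sq X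
  let d : G ⟶ F' :=
    { app X := hEM.lift (hu X) (hv X) (f.app X) (g.app X) (sq_app X)
      naturality X Y p := by
        apply hEM.hom_ext (hu X) (hv Y)
        · rw [← Category.assoc, ← u.naturality, Category.assoc, fac_lift, ← Category.assoc,
            fac_lift, f.naturality]
        · rw [Category.assoc, lift_fac, Category.assoc, v.naturality, ← Category.assoc,
            lift_fac, g.naturality] }
  refine ⟨d, ⟨?_, ?_⟩, fun d' ⟨hd'u, hd'v⟩ => ?_⟩
  · ext X; exact hEM.fac_lift (hu X) (hv X) _ _ (sq_app X)
  · ext X; exact hEM.lift_fac (hu X) (hv X) _ _ (sq_app X)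
  · ext X
    apply hEM.hom_ext (hu X) (hv X)
    · rw [← NatTrans.comp_app, hd'u]; exact (hEM.fac_lift (hu X) (hv X) _ _ (sq_app X)).symm
    · rw [← NatTrans.comp_app, hd'v]; exact (hEM.lift_fac (hu X) (hv X) _ _ (sq_app X)).symm

section FactorizationFunctor

variable (hEM : IsFactorizationSystem K E M) {F G : D ⥤ K} (α : F ⟶ G)
  (φ : ∀ X, MapFactorizationData E M (α.app X))

noncomputable def factorizationFunctor : D ⥤ K where
  obj X := (φ X).Z
  map {X Y} p := hEM.lift (φ X).hi (φ Y).hp (F.map p ≫ (φ Y).i) ((φ X).p ≫ G.map p) (by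
    rw [← Category.assoc, (φ X).fac, ← α.naturality, Category.assoc, (φ Y).fac])
  map_id X := by
    apply hEM.hom_ext (φ X).hi (φ X).hp
    · rw [fac_lift, F.map_id, Category.id_comp, Category.comp_id]
    · rw [lift_fac, G.map_id, Category.id_comp, Category.comp_id]
  map_comp {X Y Z} p q := by
    apply hEM.hom_ext (φ X).hi (φ Z).hp
    · rw [fac_lift, ← Category.assoc, fac_lift, F.map_comp, Category.assoc, Category.assoc,
        fac_lift]
    · rw [lift_fac, Category.assoc, lift_fac, ← Category.assoc, lift_fac, G.map_comp,
        Category.assoc]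

noncomputable def toFactorizationFunctor : F ⟶ hEM.factorizationFunctor α φ where
  app X := (φ X).i
  naturality X Y p := by simp only [factorizationFunctor, fac_lift]

noncomputable def fromFactorizationFunctor : hEM.factorizationFunctor α φ ⟶ G where
  app X := (φ X).p
  naturality X Y p := by simp only [factorizationFunctor, lift_fac]

theorem toFactorizationFunctor_comp_fromFactorizationFunctor :
    hEM.toFactorizationFunctor α φ ≫ hEM.fromFactorizationFunctor α φ = α :=
  NatTrans.ext (funext fun X => (φ X).fac)

end FactorizationFunctor

end IsFactorizationSystem

namespace Auto

variable {A : Type} {C : Type u} [Category.{v} C] {L : OA A ⥤ C} {E M : MorphismProperty C}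

theorem whiskerLeft_nat {N N' : Auto A L} (α : N ⟶ N') :
    Functor.whiskerLeft (OA.inc A) (Auto.nat α) = eqToHom (N.2.trans N'.2.symm) :=
  α.2

theorem hom_ext {N N' : Auto A L} {α β : N ⟶ N'} (h : Auto.nat α = Auto.nat β) : α = β :=
  Subtype.ext h

variable (L) in
def forget : Auto A L ⥤ (IA A ⥤ C) where
  obj N := N.1
  map := Auto.nat

instance isIso_nat {N N' : Auto A L} (α : N ⟶ N') [IsIso α] : IsIso (Auto.nat α) :=
  (forget L).map_isIso α

theorem nat_app_eq_eqToHom {N N' : Auto A L} (α : N ⟶ N') (T : OA A) :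
    (Auto.nat α).app T.1 = eqToHom (Functor.congr_obj (N.2.trans N'.2.symm) T) :=
  (NatTrans.congr_app (whiskerLeft_nat α) T).trans (eqToHom_app _ T)

theorem isIso_nat_app_of_ne_center {N N' : Auto A L} (α : N ⟶ N') {X : IA A}
    (hX : X ≠ IA.c A) : IsIso ((Auto.nat α).app X) := by
  rw [nat_app_eq_eqToHom α ⟨X, hX⟩]
  exact (eqToIso (Functor.congr_obj (N.2.trans N'.2.symm) ⟨X, hX⟩)).isIso_hom

theorem whiskerLeft_eq_eqToHom_of_comp {N P Q : Auto A L} (α : N ⟶ P) (γ : N ⟶ Q)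
    (β : P.1 ⟶ Q.1) (h : Auto.nat α ≫ β = Auto.nat γ) :
    Functor.whiskerLeft (OA.inc A) β = eqToHom (P.2.trans Q.2.symm) := by
  have := congrArg (Functor.whiskerLeft (OA.inc A)) h
  rwa [Functor.whiskerLeft_comp, whiskerLeft_nat, whiskerLeft_nat, eqToHom_comp_iff,
    eqToHom_trans] at this

theorem accepts_of_natTrans {N : Auto A L} {H : IA A ⥤ C} (e : N.1 ⟶ H)
    (hobj : ∀ T : OA A, N.1.obj T.1 = H.obj T.1)
    (happ : ∀ T : OA A, e.app T.1 = eqToHom (hobj T)) : Accepts H L := by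
  have (T : OA A) : IsIso ((Functor.whiskerLeft (OA.inc A) e).app T) := by
    change IsIso (e.app T.1)
    rw [happ T]
    exact (eqToIso (hobj T)).isIso_hom
  have : IsIso (Functor.whiskerLeft (OA.inc A) e) := NatIso.isIso_of_isIso_app _
  exact (Functor.ext_of_iso (asIso (Functor.whiskerLeft (OA.inc A) e)) hobj happ).symm.trans N.2


/-- Trivial at `left` and `right`, so that the middle automaton keeps the boundary objects of the
source. -/
noncomputable def componentFactorizationData (hEM : IsFactorizationSystem C E M)
    {N N' : Auto A L} (α : N ⟶ N') : ∀ X : IA A, MapFactorizationData E M ((Auto.nat α).app X)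
  | WObj.left => hEM.isoFactorizationData _ (isIso_nat_app_of_ne_center α (OA.l A).2)
  | WObj.center =>
    have := hEM.hasFactorization
    factorizationData E M _
  | WObj.right => hEM.isoFactorizationData _ (isIso_nat_app_of_ne_center α (OA.r A).2)

theorem exists_factorization (hEM : IsFactorizationSystem C E M) {N N' : Auto A L}
    (α : N ⟶ N') : ∃ (P : Auto A L) (e : N ⟶ P) (m : P ⟶ N'),
      (∀ X, E ((Auto.nat e).app X)) ∧ (∀ X, M ((Auto.nat m).app X)) ∧ e ≫ m = α := by
  let φ := componentFactorizationData hEM α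
  let e := hEM.toFactorizationFunctor (Auto.nat α) φ
  have hobj : ∀ T : OA A, N.1.obj T.1 = (hEM.factorizationFunctor (Auto.nat α) φ).obj T.1
    | ⟨WObj.left, _⟩ => rfl
    | ⟨WObj.center, h⟩ => absurd rfl h
    | ⟨WObj.right, _⟩ => rfl
  have happ : ∀ T : OA A, e.app T.1 = eqToHom (hobj T)
    | ⟨WObj.left, _⟩ => rfl
    | ⟨WObj.center, h⟩ => absurd rfl h
    | ⟨WObj.right, _⟩ => rfl
  let P : Auto A L := ⟨_, accepts_of_natTrans e hobj happ⟩
  let e' : N ⟶ P := ⟨e, NatTrans.ext (funext fun T => by rw [eqToHom_app]; exact happ T)⟩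
  have fac := hEM.toFactorizationFunctor_comp_fromFactorizationFunctor (Auto.nat α) φ
  let m' : P ⟶ N' :=
    ⟨hEM.fromFactorizationFunctor _ φ, whiskerLeft_eq_eqToHom_of_comp e' α _ fac⟩
  exact ⟨P, e', m', fun X => (φ X).hi, fun X => (φ X).hp, hom_ext fac⟩

theorem existsUnique_diagonal (hEM : IsFactorizationSystem C E M) {W X Y Z : Auto A L}
    {u : W ⟶ X} {v : Y ⟶ Z} {f : W ⟶ Y} {g : X ⟶ Z} (hu : ∀ T, E ((Auto.nat u).app T))
    (hv : ∀ T, M ((Auto.nat v).app T)) (sq : u ≫ g = f ≫ v) :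
    ∃! d : X ⟶ Y, u ≫ d = f ∧ d ≫ v = g := by
  obtain ⟨d, ⟨hdu, hdv⟩, unique⟩ :=
    hEM.existsUnique_natTrans_diagonal hu hv (congrArg Auto.nat sq)
  refine ⟨⟨d, whiskerLeft_eq_eqToHom_of_comp u f d hdu⟩, ⟨hom_ext hdu, hom_ext hdv⟩, ?_⟩
  exact fun d' hd' => hom_ext (unique _ ⟨congrArg Auto.nat hd'.1, congrArg Auto.nat hd'.2⟩)

end Auto

/-- Lemma: a factorization system `(E, M)` on `C` lifts to a factorization system
`(E_Aut, M_Aut)` on the category `Auto(L)` of automata accepting a language `L : O_A ⥤ C`,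
where a morphism of automata lies in `E_Aut` (resp. `M_Aut`) iff all of its components lie
in `E` (resp. `M`). -/
theorem lift_factorization_system_to_automata {A : Type} {C : Type u} [Category.{v} C]
    (E M : MorphismProperty C) (hEM : IsFactorizationSystem C E M) (L : OA A ⥤ C) :
    IsFactorizationSystem (Auto A L)
      (fun _ _ α => ∀ X : IA A, E ((Auto.nat α).app X))
      (fun _ _ α => ∀ X : IA A, M ((Auto.nat α).app X)) :=
  { E_iso := fun _ _ _ => hEM.E_iso _ inferInstance
    M_iso := fun _ _ _ => hEM.M_iso _ inferInstance
    E_comp := fun _ _ hf hg X => hEM.E_comp _ _ (hf X) (hg X)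
    M_comp := fun _ _ hf hg X => hEM.M_comp _ _ (hf X) (hg X)
    fac := Auto.exists_factorization hEM
    diagonal := fun _ _ _ _ hu hv sq => Auto.existsUnique_diagonal hEM hu hv sq }
end

section
/- The map φ : B* × Irr(A,B) + 1 → (B* + 1)^{A*} defined by φ(u, K) = u ⋆ K and φ(⊥) = ⊥fun is a bijection, whose inverse sends every K ≠ ⊥fun to (lcp(K), red(K)) and sends ⊥fun to ⊥. -/
/-! ### Longest common prefixes, reductions and irreducible partial functions -/

/-- The everywhere-undefined partial function `⊥fun : A* ⇀ B*`. -/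
def botfun (A B : Type) : List A → Option (List B) := fun _ => none

/-- `w` is a common prefix of all defined values of `K`. -/
def IsCommonPrefix {A B : Type} (w : List B) (K : List A → Option (List B)) : Prop :=
  ∀ u v, K u = some v → w <+: v

open Classical in
/-- The longest common prefix `lcp(K)` of all defined values of `K` (well defined whenever
`K ≠ ⊥fun`). -/
noncomputable def lcp {A B : Type} (K : List A → Option (List B)) : List B :=
  if h : ∃ w, IsCommonPrefix w K ∧ ∀ w', IsCommonPrefix w' K → w'.length ≤ w.length
  then h.choose else []

/-- The reduction of `K`: `red(K)(u) = v` when `K(u) = lcp(K) · v`, and `⊥` otherwise. -/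
noncomputable def red {A B : Type} (K : List A → Option (List B)) :
    List A → Option (List B) :=
  fun u => (K u).map (fun v => v.drop (lcp K).length)

theorem exists_ne_none_of_ne_botfun {A B : Type} {K : List A → Option (List B)}
    (h : K ≠ botfun A B) : ∃ u v, K u = some v := by
  by_contra hc
  push_neg at hc
  apply h
  funext u
  rcases hK : K u with _ | v
  · rfl
  · exact absurd hK (hc u v)

theorem exists_longest_common_prefix {A B : Type} {K : List A → Option (List B)}
    (h : K ≠ botfun A B) :
    ∃ w, IsCommonPrefix w K ∧ ∀ w', IsCommonPrefix w' K → w'.length ≤ w.length := by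
  classical
  obtain ⟨u, v, huv⟩ := exists_ne_none_of_ne_botfun h
  set P : ℕ → Prop := fun n => ∃ w, IsCommonPrefix w K ∧ w.length = n with hP
  have hbound : ∀ w, IsCommonPrefix w K → w.length ≤ v.length :=
    fun w hw => (hw u v huv).length_le
  have hspec : P (Nat.findGreatest P v.length) :=
    Nat.findGreatest_spec (m := 0) (Nat.zero_le _) ⟨[], fun _ _ _ => List.nil_prefix, rfl⟩
  obtain ⟨w₀, hw₀, hlen⟩ := hspec
  refine ⟨w₀, hw₀, fun w' hw' => ?_⟩
  have := Nat.le_findGreatest (P := P) (hbound w' hw') ⟨w', hw', rfl⟩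
  omega

theorem lcp_spec {A B : Type} {K : List A → Option (List B)} (h : K ≠ botfun A B) :
    IsCommonPrefix (lcp K) K ∧ ∀ w, IsCommonPrefix w K → w.length ≤ (lcp K).length := by
  classical
  have hex := exists_longest_common_prefix h
  rw [lcp, dif_pos hex]
  exact hex.choose_spec

theorem red_ne_botfun {A B : Type} {K : List A → Option (List B)} (h : K ≠ botfun A B) :
    red K ≠ botfun A B := by
  obtain ⟨u, v, huv⟩ := exists_ne_none_of_ne_botfun h
  intro hbad
  have : red K u = none := congrFun hbad u
  simp [red, huv] at this

theorem lcp_red {A B : Type} {K : List A → Option (List B)} (h : K ≠ botfun A B) :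
    lcp (red K) = [] := by
  have hrb := red_ne_botfun h
  have hred := lcp_spec hrb
  have hK := lcp_spec h
  have hcommon : IsCommonPrefix (lcp K ++ lcp (red K)) K := by
    intro u v huv
    obtain ⟨t, ht⟩ := hK.1 u v huv
    have h2 : red K u = some (v.drop (lcp K).length) := by simp [red, huv]
    have hdrop : v.drop (lcp K).length = t := by rw [← ht]; simp
    rw [hdrop] at h2
    obtain ⟨s, hs⟩ := hred.1 u t h2
    exact ⟨s, by rw [List.append_assoc, hs, ht]⟩
  have hle := hK.2 _ hcommon
  rw [List.length_append] at hle
  have : (lcp (red K)).length = 0 := by omega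
  exact List.eq_nil_of_length_eq_zero this

/-- The irreducible partial functions: those `K ≠ ⊥fun` with `lcp(K) = ε`. -/
def Irr (A B : Type) : Type :=
  { K : List A → Option (List B) // K ≠ botfun A B ∧ lcp K = [] }

/-- For `K ≠ ⊥fun`, the decomposition `(lcp K, red K)`, with `red K` irreducible. -/
noncomputable def toIrr {A B : Type} (K : List A → Option (List B)) (h : K ≠ botfun A B) :
    List B × Irr A B :=
  (lcp K, ⟨red K, red_ne_botfun h, lcp_red h⟩)

/-- `v ⋆ K`: prepend `v` to every defined value of `K`. -/
def star {A B : Type} (v : List B) (K : List A → Option (List B)) :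
    List A → Option (List B) :=
  fun u => (K u).map (fun x => v ++ x)

/-- The map `φ : B* × Irr(A,B) + 1 → (B* + 1)^{A*}`, sending `(v, K)` to `v ⋆ K` and
`⊥` to `⊥fun`. -/
def phi (A B : Type) : Option (List B × Irr A B) → (List A → Option (List B))
  | none => botfun A B
  | some (v, K) => star v K.1


/-! The common prefixes of a `K ≠ ⊥fun` are all prefixes of one defined value, so they form a
chain and are exactly the prefixes of `lcp K`. Consequently `lcp (v ⋆ K) = v · lcp K` and
`red (v ⋆ K) = red K`, so `K ↦ (lcp K, red K)` (and `⊥fun ↦ ⊥`) is a two-sided inverse of `φ`. -/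

section Star

variable {A B : Type}

theorem star_apply (v : List B) (K : List A → Option (List B)) (u : List A) :
    star v K u = (K u).map (v ++ ·) :=
  rfl

theorem isCommonPrefix_append_star_iff {v w : List B} {K : List A → Option (List B)} :
    IsCommonPrefix (v ++ w) (star v K) ↔ IsCommonPrefix w K := by
  constructor
  · intro h u y hy
    exact (List.prefix_append_right_inj v).1 (h u (v ++ y) (by rw [star_apply, hy]; rfl))
  · intro h u x hx
    obtain ⟨y, hy, rfl⟩ := Option.map_eq_some_iff.1 hx
    exact (List.prefix_append_right_inj v).2 (h u y hy)

theorem isCommonPrefix_iff_prefix_lcp {K : List A → Option (List B)} (h : K ≠ botfun A B)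
    {w : List B} : IsCommonPrefix w K ↔ w <+: lcp K := by
  obtain ⟨u, y, hy⟩ := exists_ne_none_of_ne_botfun h
  refine ⟨fun hw => ?_, fun hw u' y' hy' => hw.trans ((lcp_spec h).1 u' y' hy')⟩
  exact List.prefix_of_prefix_length_le (hw u y hy) ((lcp_spec h).1 u y hy) ((lcp_spec h).2 w hw)

theorem star_ne_botfun {K : List A → Option (List B)} (h : K ≠ botfun A B) (v : List B) :
    star v K ≠ botfun A B := by
  obtain ⟨u, y, hy⟩ := exists_ne_none_of_ne_botfun h
  intro hbot
  have : star v K u = none := congrFun hbot u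
  simp [star_apply, hy] at this

theorem lcp_star {K : List A → Option (List B)} (h : K ≠ botfun A B) (v : List B) :
    lcp (star v K) = v ++ lcp K := by
  have hstar := star_ne_botfun h v
  have hle : v ++ lcp K <+: lcp (star v K) := by
    rw [← isCommonPrefix_iff_prefix_lcp hstar, isCommonPrefix_append_star_iff,
      isCommonPrefix_iff_prefix_lcp h]
  obtain ⟨t, ht⟩ := hle
  have hlong : lcp K ++ t <+: lcp K := by
    rw [← isCommonPrefix_iff_prefix_lcp h, ← isCommonPrefix_append_star_iff (v := v),
      ← List.append_assoc, ht, isCommonPrefix_iff_prefix_lcp hstar]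
  have ht_nil : t = [] := by
    simpa using hlong.length_le
  rw [← ht, ht_nil, List.append_nil]

theorem red_star {K : List A → Option (List B)} (h : K ≠ botfun A B) (v : List B) :
    red (star v K) = red K := by
  funext u
  simp [red, star_apply, lcp_star h, Option.map_map, Function.comp_def]

theorem red_eq_self_of_lcp_eq_nil {K : List A → Option (List B)} (hK : lcp K = []) :
    red K = K := by
  funext u
  simp [red, hK]

theorem star_lcp_red {K : List A → Option (List B)} (h : K ≠ botfun A B) :
    star (lcp K) (red K) = K := by
  funext u
  rcases hK : K u with _ | y
  · simp [star_apply, red, hK]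
  · obtain ⟨t, rfl⟩ := (lcp_spec h).1 u y hK
    simp [star_apply, red, hK]

end Star

section Phi

variable (A B : Type)

open Classical in
noncomputable def phiInv (K : List A → Option (List B)) : Option (List B × Irr A B) :=
  if h : K = botfun A B then none else some (toIrr K h)

variable {A B} in
theorem phi_some (v : List B) (K : Irr A B) : phi A B (some (v, K)) = star v K.1 :=
  rfl

theorem phiInv_botfun : phiInv A B (botfun A B) = none :=
  dif_pos rfl

variable {A B} in
theorem phiInv_of_ne_botfun {K : List A → Option (List B)} (h : K ≠ botfun A B) :
    phiInv A B K = some (toIrr K h) :=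
  dif_neg h

theorem phiInv_phi : Function.LeftInverse (phiInv A B) (phi A B) := by
  rintro (_ | ⟨v, K⟩)
  · exact phiInv_botfun A B
  · obtain ⟨hK, hirr⟩ := K.2
    rw [phi_some, phiInv_of_ne_botfun (star_ne_botfun hK v)]
    refine congrArg some (Prod.ext ?_ (Subtype.ext ?_))
    · exact (lcp_star hK v).trans (by rw [hirr, List.append_nil])
    · exact (red_star hK v).trans (red_eq_self_of_lcp_eq_nil hirr)

theorem phi_phiInv : Function.RightInverse (phiInv A B) (phi A B) := by
  intro K
  by_cases h : K = botfun A B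
  · rw [h, phiInv_botfun]
    rfl
  · rw [phiInv_of_ne_botfun h]
    exact star_lcp_red h

end Phi

/-- `φ` is a bijection, whose inverse sends `⊥fun` to `⊥` and every `K ≠ ⊥fun` to
`(lcp K, red K)`. -/
theorem phi_bijective (A B : Type) :
    Function.Bijective (phi A B) ∧
    (∀ t, phi A B t = botfun A B → t = none) ∧
    (∀ K, K ≠ botfun A B → ∀ t, phi A B t = K →
      ∃ p : List B × Irr A B, t = some p ∧ p.1 = lcp K ∧ (p.2 : Irr A B).1 = red K) := by
  refine ⟨⟨(phiInv_phi A B).injective, (phi_phiInv A B).surjective⟩, fun t ht => ?_,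
    fun K hK t ht => ⟨toIrr K hK, ?_, rfl, rfl⟩⟩
  · rw [← phiInv_phi A B t, ht, phiInv_botfun]
  · rw [← phiInv_phi A B t, ht, phiInv_of_ne_botfun hK]
end

section
/- (E_Kl, M_Kl) is a factorization system on the Kleisli category Kl(T) of the monad T X = B* × X + 1: every Kleisli morphism f : X ⇸ Y factors as f = m ∘ e (Kleisli composition) with e ∈ E_Kl and m ∈ M_Kl, both classes contain all isomorphisms and are closed under composition, and for every commuting square g ∘ e = m ∘ f in Kl(T) with e ∈ E_Kl and m ∈ M_Kl there exists a unique diagonal d with d ∘ e = f and m ∘ d = g. -/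
open CategoryTheory CategoryTheory.Limits

universe v u

/-! ### The transducer monad `T X = B* × X + 1` and its Kleisli category -/

/-- The monad `T X = B* × X + 1` (implemented as `Option (List B × X)`,
with `none` playing the role of `⊥ ∈ 1`). -/
def TM (B : Type) (X : Type) : Type := Option (List B × X)

namespace TM

variable {B : Type}

/-- `⊥` : the element of `1` in `T X = B* × X + 1`. -/
def bot {X : Type} : TM B X := (none : Option (List B × X))

/-- `(w, x)` as an element of `T X`. -/
def el {X : Type} (w : List B) (x : X) : TM B X := (some (w, x) : Option (List B × X))

/-- The unit of the monad: `x ↦ (ε, x)`. -/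
def unit {X : Type} (x : X) : TM B X := el [] x

/-- The bind operation of the monad, corresponding to the multiplication
`(w, (u, x)) ↦ (wu, x)`, everything else going to `⊥`. -/
def bindT {X Y : Type} (t : TM B X) (f : X → TM B Y) : TM B Y :=
  Option.bind (t : Option (List B × X)) fun p =>
    Option.map (fun q => (p.1 ++ q.1, q.2)) (f p.2 : Option (List B × Y))

instance : Monad (TM B) where
  pure := unit
  bind := bindT

instance : LawfulMonad (TM B) := by
  apply LawfulMonad.mk' (m := TM B)
  · intro α t
    show bindT t (fun x => unit x) = t
    rcases (t : Option (List B × α)) with _ | ⟨w, x⟩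
    · rfl
    · simp [bindT, unit, el] <;> rfl
  · intro α β x f
    show bindT (unit x) f = f x
    rcases hf : (f x : Option (List B × β)) with _ | ⟨u, y⟩ <;>
      simp [bindT, unit, el, hf] <;> rfl
  · intro α β γ t f g
    show bindT (bindT t f) g = bindT t fun x => bindT (f x) g
    rcases (t : Option (List B × α)) with _ | ⟨w, x⟩
    · rfl
    · rcases hf : (f x : Option (List B × β)) with _ | ⟨u, y⟩
      · simp [bindT, hf] <;> rfl
      · rcases hg : (g y : Option (List B × γ)) with _ | ⟨v, z⟩ <;>
          simp [bindT, hf, hg] <;> rfl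

end TM

/-- The Kleisli category `Kl(T)` of the monad `T X = B* × X + 1`. -/
abbrev KlT (B : Type) := CategoryTheory.KleisliCat (TM B)

/-- The projection `π₁(f) : X → B* + 1` of a Kleisli morphism `f : X ⇸ Y`. -/
def pi1 {B X Y : Type} (f : X → TM B Y) : X → Option (List B) :=
  fun x => Option.map Prod.fst (f x : Option (List B × Y))

/-- The projection `π₂(f) : X → Y + 1` of a Kleisli morphism `f : X ⇸ Y`. -/
def pi2 {B X Y : Type} (f : X → TM B Y) : X → Option Y :=
  fun x => Option.map Prod.snd (f x : Option (List B × Y))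

/-- The class `E_Kl` of Kleisli morphisms `e` with `π₂(e)` surjective onto `Y`. -/
def EKl {B : Type} {X Y : KlT B} (f : X ⟶ Y) : Prop :=
  ∀ y : Y, ∃ x : X, pi2 f x = some y

/-- The class `M_Kl` of Kleisli morphisms `m` with `π₂(m)` injective and `π₁(m)`
constantly `ε`. -/
def MKl {B : Type} {X Y : KlT B} (f : X ⟶ Y) : Prop :=
  Function.Injective (pi2 f) ∧ ∀ x : X, pi1 f x = some ([] : List B)

/-!
A Kleisli morphism in `M_Kl` is a pure injection `x ↦ (ε, φ x)`, so it is a split monomorphism: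
its retraction inverts `φ` on the range and sends everything else to `⊥`. A morphism `e` in `E_Kl`
is an epimorphism, because every `y` occurs as an output `(w, y)` of `e` and prepending the word
`w` is injective. In any category a commuting square with an epimorphism on one side and a split
monomorphism on the other has a unique diagonal, namely `g ≫ r` for the retraction `r`. A morphism
`f` factors through the image of `π₂(f)`, and isomorphisms are pure bijections.
-/

namespace TM

variable {B X Y : Type}

theorem eq_bot_or_exists_eq_el (t : TM B X) : t = bot ∨ ∃ w x, t = el w x := by
  rcases (t : Option (List B × X)) with _ | ⟨w, x⟩
  · exact Or.inl rfl
  · exact Or.inr ⟨w, x, rfl⟩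

theorem el_ne_bot (w : List B) (x : X) : el w x ≠ bot := Option.some_ne_none _

theorem el_inj {w w' : List B} {x x' : X} : el w x = el w' x' ↔ w = w' ∧ x = x' :=
  Option.some_inj.trans Prod.mk_inj

theorem bindT_el (w : List B) (x : X) (f : X → TM B Y) :
    bindT (el w x) f = Option.map (fun q => (w ++ q.1, q.2)) (f x) := rfl

theorem bindT_el_of_eq_bot {w : List B} {x : X} {f : X → TM B Y} (h : f x = bot) :
    bindT (el w x) f = bot := by
  rw [bindT_el, h]; rfl

theorem bindT_el_of_eq_el {w u : List B} {x : X} {y : Y} {f : X → TM B Y} (h : f x = el u y) :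
    bindT (el w x) f = el (w ++ u) y := by
  rw [bindT_el, h]; rfl

theorem bindT_unit (x : X) (f : X → TM B Y) : bindT (unit x) f = f x :=
  pure_bind (m := TM B) x f

theorem bindT_el_inj {w : List B} {x : X} {f g : X → TM B Y} :
    bindT (el w x) f = bindT (el w x) g ↔ f x = g x :=
  (Option.map_injective fun p q h => by
    simpa [Prod.ext_iff] using h).eq_iff

theorem exists_of_bindT_eq_unit {t : TM B X} {f : X → TM B Y} {y : Y}
    (h : bindT t f = unit y) : ∃ x, t = unit x ∧ f x = unit y := by
  obtain rfl | ⟨w, x, rfl⟩ := t.eq_bot_or_exists_eq_el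
  · exact absurd h.symm (el_ne_bot _ _)
  obtain hfx | ⟨u, z, hfx⟩ := (f x).eq_bot_or_exists_eq_el
  · exact absurd (h.symm.trans (bindT_el_of_eq_bot hfx)) (el_ne_bot _ _)
  obtain ⟨hwu, rfl⟩ := el_inj.1 ((bindT_el_of_eq_el hfx).symm.trans h)
  obtain ⟨rfl, rfl⟩ := List.append_eq_nil_iff.1 hwu
  exact ⟨x, rfl, hfx⟩

end TM

section Projections

variable {B X Y : Type}

theorem pi2_eq_some_iff {f : X → TM B Y} {x : X} {y : Y} :
    pi2 f x = some y ↔ ∃ w, f x = TM.el w y :=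
  Option.map_eq_some_iff.trans
    ⟨fun ⟨⟨w, _⟩, h, rfl⟩ => ⟨w, h⟩, fun ⟨w, h⟩ => ⟨(w, y), h, rfl⟩⟩

theorem pi1_eq_nil_iff {f : X → TM B Y} {x : X} :
    pi1 f x = some [] ↔ ∃ y, f x = TM.unit y :=
  Option.map_eq_some_iff.trans
    ⟨fun ⟨⟨_, y⟩, h, rfl⟩ => ⟨y, h⟩, fun ⟨y, h⟩ => ⟨([], y), h, rfl⟩⟩

end Projections

namespace KlT

variable {B : Type}

theorem comp_apply {X Y Z : KlT B} (f : X ⟶ Y) (g : Y ⟶ Z) (x : X) :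
    (f ≫ g) x = TM.bindT (f x) g := rfl

theorem exists_unit_of_isIso {X Y : KlT B} (f : X ⟶ Y) [IsIso f] (x : X) :
    ∃ y, f x = TM.unit y ∧ inv f y = TM.unit x :=
  TM.exists_of_bindT_eq_unit (congrFun (IsIso.hom_inv_id f) x)

end KlT

section Classes

variable {B : Type}

theorem mKl_iff {X Y : KlT B} (m : X ⟶ Y) :
    MKl m ↔ ∃ φ : X → Y, Function.Injective φ ∧ ∀ x, m x = TM.unit (φ x) := by
  constructor
  · rintro ⟨hinj, hnil⟩
    choose φ hφ using fun x => pi1_eq_nil_iff.1 (hnil x)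
    refine ⟨φ, fun x₁ x₂ h => hinj ?_, hφ⟩
    rw [pi2_eq_some_iff.2 ⟨[], (hφ x₁).trans (congrArg TM.unit h)⟩, pi2_eq_some_iff.2 ⟨[], hφ x₂⟩]
  · rintro ⟨φ, hφ, hm⟩
    have hpi2 : ∀ x, pi2 m x = some (φ x) := fun x => pi2_eq_some_iff.2 ⟨[], hm x⟩
    exact ⟨fun x₁ x₂ h => hφ (Option.some_injective _ (by rw [← hpi2, ← hpi2, h])),
      fun x => pi1_eq_nil_iff.2 ⟨φ x, hm x⟩⟩

theorem MKl.of_isIso {X Y : KlT B} (f : X ⟶ Y) [IsIso f] : MKl f := by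
  choose φ hφ hinv using KlT.exists_unit_of_isIso f
  refine (mKl_iff f).2 ⟨φ, fun x₁ x₂ h => ?_, hφ⟩
  exact (TM.el_inj.1 ((hinv x₁).symm.trans ((congrArg (inv f) h).trans (hinv x₂)))).2

theorem EKl.of_isIso {X Y : KlT B} (f : X ⟶ Y) [IsIso f] : EKl f := fun y => by
  obtain ⟨x, -, hx⟩ := KlT.exists_unit_of_isIso (inv f) y
  rw [IsIso.inv_inv] at hx
  exact ⟨x, pi2_eq_some_iff.2 ⟨[], hx⟩⟩

theorem EKl.comp {X Y Z : KlT B} {f : X ⟶ Y} {g : Y ⟶ Z} (hf : EKl f) (hg : EKl g) :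
    EKl (f ≫ g) := fun z => by
  obtain ⟨y, hy⟩ := hg z
  obtain ⟨u, hgy⟩ := pi2_eq_some_iff.1 hy
  obtain ⟨x, hx⟩ := hf y
  obtain ⟨w, hfx⟩ := pi2_eq_some_iff.1 hx
  refine ⟨x, pi2_eq_some_iff.2 ⟨w ++ u, ?_⟩⟩
  rw [KlT.comp_apply, hfx, TM.bindT_el_of_eq_el hgy]

theorem MKl.comp {X Y Z : KlT B} {f : X ⟶ Y} {g : Y ⟶ Z} (hf : MKl f) (hg : MKl g) :
    MKl (f ≫ g) := by
  obtain ⟨φ, hφ, hf⟩ := (mKl_iff f).1 hf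
  obtain ⟨ψ, hψ, hg⟩ := (mKl_iff g).1 hg
  refine (mKl_iff _).2 ⟨ψ ∘ φ, hψ.comp hφ, fun x => ?_⟩
  rw [KlT.comp_apply, hf, TM.bindT_unit (φ x) g, hg]; rfl

theorem EKl.epi {X Y : KlT B} {e : X ⟶ Y} (he : EKl e) : Epi e where
  left_cancellation a b h := funext fun y => by
    obtain ⟨x, hx⟩ := he y
    obtain ⟨w, hex⟩ := pi2_eq_some_iff.1 hx
    have := congrFun h x
    rwa [KlT.comp_apply, KlT.comp_apply, hex, TM.bindT_el_inj (f := a) (g := b)] at this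

noncomputable def KlT.splitMonoOfInjective {X Y : KlT B} {m : X ⟶ Y} {φ : X → Y}
    (hφ : Function.Injective φ) (hm : ∀ x, m x = TM.unit (φ x)) : SplitMono m where
  retraction y := (Function.partialInv φ y).elim TM.bot TM.unit
  id := funext fun x => by
    rw [KlT.comp_apply, hm, TM.bindT_unit (X := Y) (Y := X), Function.partialInv_left hφ]
    rfl

theorem MKl.isSplitMono {X Y : KlT B} {m : X ⟶ Y} (hm : MKl m) : IsSplitMono m :=
  let ⟨_, hφ, hm⟩ := (mKl_iff m).1 hm
  IsSplitMono.mk' (KlT.splitMonoOfInjective hφ hm)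

end Classes

theorem existsUnique_diagonal_of_epi_of_isSplitMono {C : Type u} [Category.{v} C]
    {X Y X' Y' : C} {u : X ⟶ Y} {v : X' ⟶ Y'} {f : X ⟶ X'} {g : Y ⟶ Y'} [Epi u]
    [IsSplitMono v] (h : u ≫ g = f ≫ v) : ∃! d : Y ⟶ X', u ≫ d = f ∧ d ≫ v = g := by
  have hf : u ≫ g ≫ retraction v = f := by
    rw [← Category.assoc, h, Category.assoc, IsSplitMono.id, Category.comp_id]
  refine ⟨g ≫ retraction v, ⟨hf, (cancel_epi u).1 ?_⟩,
    fun d hd => (cancel_epi u).1 (hd.1.trans hf.symm)⟩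
  rw [← Category.assoc, hf, h]

namespace KlT

variable {B : Type} {X Y : KlT B}

def image (f : X ⟶ Y) : KlT B := {y : Y // ∃ x, pi2 f x = some y}

def factorThruImage (f : X ⟶ Y) : X ⟶ image f := fun x =>
  match h : (f x : Option (List B × Y)) with
  | none => TM.bot
  | some (w, y) => TM.el w ⟨y, x, pi2_eq_some_iff.2 ⟨w, h⟩⟩

def image.ι (f : X ⟶ Y) : image f ⟶ Y := fun y => TM.unit y.1

theorem factorThruImage_eq_el {f : X ⟶ Y} {x : X} {w : List B} {y : Y} (h : f x = TM.el w y) :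
    factorThruImage f x = TM.el w ⟨y, x, pi2_eq_some_iff.2 ⟨w, h⟩⟩ := by
  unfold factorThruImage
  split
  next hbot => exact absurd (h.symm.trans hbot) (TM.el_ne_bot _ _)
  next w' y' hel =>
    obtain ⟨rfl, rfl⟩ := TM.el_inj.1 (hel.symm.trans h)
    rfl

theorem factorThruImage_eq_bot {f : X ⟶ Y} {x : X} (h : f x = TM.bot) : factorThruImage f x = TM.bot := by
  unfold factorThruImage
  split
  next => rfl
  next hel => exact absurd (hel.symm.trans h) (TM.el_ne_bot _ _)

theorem eKl_factorThruImage (f : X ⟶ Y) : EKl (factorThruImage f) := fun ⟨y, x, hx⟩ => by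
  obtain ⟨w, h⟩ := pi2_eq_some_iff.1 hx
  exact ⟨x, pi2_eq_some_iff.2 ⟨w, factorThruImage_eq_el h⟩⟩

theorem mKl_image_ι (f : X ⟶ Y) : MKl (image.ι f) :=
  (mKl_iff _).2 ⟨Subtype.val, Subtype.val_injective, fun _ => rfl⟩

theorem image.fac (f : X ⟶ Y) : factorThruImage f ≫ image.ι f = f := by
  funext x
  rw [comp_apply]
  obtain h | ⟨w, y, h⟩ := (f x).eq_bot_or_exists_eq_el
  · rw [factorThruImage_eq_bot h, h]
    rfl
  · rw [factorThruImage_eq_el h]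
    exact (TM.bindT_el_of_eq_el rfl).trans ((congrArg (TM.el · y) (List.append_nil w)).trans h.symm)

end KlT

/-- `(E_Kl, M_Kl)` is a factorization system on the Kleisli category `Kl(T)` of the monad
`T X = B* × X + 1`. -/
theorem eklmkl_factorization_system (B : Type) :
    IsFactorizationSystem (KlT B) (fun _ _ f => EKl f) (fun _ _ f => MKl f) := by
  exact
    { E_iso := fun f _ => EKl.of_isIso f
      M_iso := fun f _ => MKl.of_isIso f
      E_comp := fun _ _ hf hg => hf.comp hg
      M_comp := fun _ _ hf hg => hf.comp hg
      fac := fun f => ⟨_, _, _, KlT.eKl_factorThruImage f, KlT.mKl_image_ι f, KlT.image.fac f⟩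
      diagonal := fun _ _ _ _ hu hv h =>
        haveI := hu.epi
        haveI := hv.isSplitMono
        existsUnique_diagonal_of_epi_of_isSplitMono h }
end

section
/- Let N be a nondeterministic finite automaton over an alphabet A accepting a language L ⊆ A*. Then the deterministic automaton determinize(transpose(determinize(transpose(N)))) accepts L, is reachable (every state is reachable from the initial state by some input word), and is observable (distinct states accept distinct residual languages); consequently it is a minimal deterministic automaton for L, i.e., its states are in bijection with the left quotients { w⁻¹L | w ∈ A* } of L, compatibly with initial state, transitions, and acceptance. -/
/-! ### Brzozowski's minimization algorithm -/

/-- A nondeterministic automaton over an alphabet `A`: a set of states, sets of initial and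
final states, and a transition relation. -/
structure NAut (A : Type) where
  Q : Type
  start : Set Q
  final : Set Q
  step : Q → A → Q → Prop

/-- Acceptance from a state: there is a run along the word ending in a final state. -/
def NAut.AccFrom {A : Type} (N : NAut A) : N.Q → List A → Prop
  | q, [] => q ∈ N.final
  | q, a :: w => ∃ q', N.step q a q' ∧ N.AccFrom q' w

/-- The language of `N`: words having an accepting run from some initial state. -/
def NAut.Accepts {A : Type} (N : NAut A) (w : List A) : Prop :=
  ∃ q ∈ N.start, N.AccFrom q w

/-- `transpose(N)`: reverse all transitions and swap initial and final states. -/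
def NAut.transpose {A : Type} (N : NAut A) : NAut A where
  Q := N.Q
  start := N.final
  final := N.start
  step q a q' := N.step q' a q

/-- A deterministic automaton. -/
structure DAut (A : Type) where
  Q : Type
  start : Q
  final : Q → Prop
  step : Q → A → Q

/-- The state reached from `q` after reading `w`. -/
def DAut.run {A : Type} (M : DAut A) (q : M.Q) (w : List A) : M.Q :=
  w.foldl M.step q

/-- The language of a deterministic automaton. -/
def DAut.Accepts {A : Type} (M : DAut A) (w : List A) : Prop :=
  M.final (M.run M.start w)

/-- One step of the subset construction. -/
def NAut.post {A : Type} (N : NAut A) (S : Set N.Q) (a : A) : Set N.Q :=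
  { q' | ∃ q ∈ S, N.step q a q' }

/-- The set of states reachable from a state in `S` along the word `w`. -/
def NAut.postRun {A : Type} (N : NAut A) (S : Set N.Q) (w : List A) : Set N.Q :=
  w.foldl N.post S

theorem NAut.postRun_append_singleton {A : Type} (N : NAut A) (S : Set N.Q) (w : List A)
    (a : A) : N.postRun S (w ++ [a]) = N.post (N.postRun S w) a := by
  simp [NAut.postRun, List.foldl_append]

/-- `determinize(N)`: the subset construction restricted to the subsets reachable from the
set of initial states. -/
def NAut.determinize {A : Type} (N : NAut A) : DAut A where
  Q := { S : Set N.Q // ∃ w, N.postRun N.start w = S }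
  start := ⟨N.start, [], rfl⟩
  final S := ∃ q ∈ S.1, q ∈ N.final
  step S a := ⟨N.post S.1 a, by
    obtain ⟨w, hw⟩ := S.2
    exact ⟨w ++ [a], by rw [N.postRun_append_singleton, hw]⟩⟩

/-- A deterministic automaton regarded as a nondeterministic one. -/
def DAut.toNAut {A : Type} (M : DAut A) : NAut A where
  Q := M.Q
  start := {M.start}
  final := { q | M.final q }
  step q a q' := M.step q a = q'

/-- Brzozowski's algorithm: `determinize ∘ transpose ∘ determinize ∘ transpose`. -/
def brzozowski {A : Type} (N : NAut A) : DAut A :=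
  (((N.transpose).determinize).toNAut.transpose).determinize

/-!
Transposing a reachable deterministic automaton `D` and determinizing the result yields an
observable automaton: the residual language of a subset `S` of states consists of the words `v`
such that `D` reads `v.reverse` from its initial state into `S`, and since every state of `D` is
reached on some word, this language determines `S`. Determinization always produces a reachable
automaton, so the last determinization in `det ∘ trans ∘ det ∘ trans` is both reachable and
observable. Such an automaton for `L` is minimal: sending a state to its residual language is a
bijection onto the left quotients of `L`.
-/

namespace DAut

variable {A : Type} (M : DAut A)

def residual (q : M.Q) : Set (List A) :=
  { v | M.final (M.run q v) }

def IsReachable : Prop :=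
  ∀ q, ∃ w, M.run M.start w = q

def IsObservable : Prop :=
  Function.Injective M.residual

theorem run_append (q : M.Q) (w v : List A) : M.run q (w ++ v) = M.run (M.run q w) v :=
  List.foldl_append ..

theorem residual_run (q : M.Q) (w : List A) :
    M.residual (M.run q w) = { v | w ++ v ∈ M.residual q } := by
  ext v
  simp only [residual, Set.mem_ofPred_eq, run_append]

theorem residual_start_eq {L : Set (List A)} (hL : ∀ w, M.Accepts w ↔ w ∈ L) :
    M.residual M.start = L :=
  Set.ext hL

variable {M}

theorem exists_equiv_leftQuotients {L : Set (List A)} (hL : ∀ w, M.Accepts w ↔ w ∈ L)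
    (hreach : M.IsReachable) (hobs : M.IsObservable) :
    ∃ e : M.Q ≃ { K : Set (List A) // ∃ w, K = { v | w ++ v ∈ L } },
      (e M.start).1 = L ∧
      (∀ (q : M.Q) (a : A), (e (M.step q a)).1 = { v | a :: v ∈ (e q).1 }) ∧
      (∀ q : M.Q, M.final q ↔ [] ∈ (e q).1) := by
  have residual_run_start (w : List A) : M.residual (M.run M.start w) = { v | w ++ v ∈ L } := by
    rw [residual_run, residual_start_eq M hL]
  let f : M.Q → { K : Set (List A) // ∃ w, K = { v | w ++ v ∈ L } } := fun q =>
    ⟨M.residual q, by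
      obtain ⟨w, rfl⟩ := hreach q
      exact ⟨w, residual_run_start w⟩⟩
  have hf : Function.Bijective f := by
    refine ⟨fun q q' h => hobs (congrArg Subtype.val h), ?_⟩
    rintro ⟨K, w, rfl⟩
    exact ⟨M.run M.start w, Subtype.ext (residual_run_start w)⟩
  exact ⟨Equiv.ofBijective f hf, residual_start_eq M hL, fun _ _ => rfl, fun _ => Iff.rfl⟩

variable (M)

theorem toNAut_accFrom_iff (q : M.Q) (w : List A) :
    M.toNAut.AccFrom q w ↔ w ∈ M.residual q := by
  induction w generalizing q with
  | nil => exact Iff.rfl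
  | cons a w ih =>
    show (∃ q', M.step q a = q' ∧ M.toNAut.AccFrom q' w) ↔ w ∈ M.residual (M.step q a)
    exact ⟨fun ⟨_, hstep, hacc⟩ => hstep ▸ (ih _).mp hacc,
      fun h => ⟨_, rfl, (ih _).mpr h⟩⟩

theorem toNAut_accepts (w : List A) : M.toNAut.Accepts w ↔ M.Accepts w := by
  show (∃ q ∈ ({M.start} : Set M.Q), M.toNAut.AccFrom q w) ↔ _
  simp only [Set.mem_singleton_iff, exists_eq_left]
  exact M.toNAut_accFrom_iff M.start w

end DAut

namespace NAut

variable {A : Type} (N : NAut A)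

theorem postRun_cons (S : Set N.Q) (a : A) (w : List A) :
    N.postRun S (a :: w) = N.postRun (N.post S a) w :=
  rfl

theorem exists_accFrom_iff_postRun (S : Set N.Q) (w : List A) :
    (∃ q ∈ S, N.AccFrom q w) ↔ ∃ q ∈ N.postRun S w, q ∈ N.final := by
  induction w generalizing S with
  | nil => exact Iff.rfl
  | cons a w ih =>
    rw [postRun_cons, ← ih]
    exact ⟨fun ⟨q, hq, q', hstep, hacc⟩ => ⟨q', ⟨q, hq, hstep⟩, hacc⟩,
      fun ⟨q', ⟨q, hq, hstep⟩, hacc⟩ => ⟨q, hq, q', hstep, hacc⟩⟩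

theorem determinize_run_val (S : N.determinize.Q) (w : List A) :
    (N.determinize.run S w).1 = N.postRun S.1 w := by
  induction w generalizing S with
  | nil => rfl
  | cons a w ih => exact ih _

theorem determinize_accepts (w : List A) : N.determinize.Accepts w ↔ N.Accepts w := by
  show (∃ q ∈ (N.determinize.run N.determinize.start w).1, q ∈ N.final) ↔ _
  rw [determinize_run_val, ← exists_accFrom_iff_postRun]
  rfl

theorem determinize_isReachable : N.determinize.IsReachable := by
  rintro ⟨S, w, hw⟩
  exact ⟨w, Subtype.ext ((N.determinize_run_val _ w).trans hw)⟩

theorem transpose_accFrom_iff (q : N.Q) (w : List A) :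
    N.transpose.AccFrom q w ↔ q ∈ N.postRun N.start w.reverse := by
  induction w generalizing q with
  | nil => exact Iff.rfl
  | cons a w ih =>
    simp only [AccFrom, List.reverse_cons, postRun_append_singleton]
    exact ⟨fun ⟨q', hstep, hacc⟩ => ⟨q', (ih q').mp hacc, hstep⟩,
      fun ⟨q', hq', hstep⟩ => ⟨q', hstep, (ih q').mpr hq'⟩⟩

theorem transpose_accepts (w : List A) : N.transpose.Accepts w ↔ N.Accepts w.reverse := by
  rw [Accepts, Accepts, N.exists_accFrom_iff_postRun N.start]
  exact ⟨fun ⟨q, hfinal, hacc⟩ => ⟨q, (N.transpose_accFrom_iff q w).mp hacc, hfinal⟩,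
    fun ⟨q, hq, hfinal⟩ => ⟨q, hfinal, (N.transpose_accFrom_iff q w).mpr hq⟩⟩

end NAut

namespace DAut

variable {A : Type} (M : DAut A)

theorem toNAut_transpose_post (T : Set M.Q) (a : A) :
    M.toNAut.transpose.post T a = { q | M.step q a ∈ T } := by
  ext q
  show (∃ p ∈ T, M.step q a = p) ↔ M.step q a ∈ T
  exact ⟨fun ⟨_, hp, hstep⟩ => hstep ▸ hp, fun h => ⟨_, h, rfl⟩⟩

theorem toNAut_transpose_postRun (T : Set M.Q) (w : List A) :
    M.toNAut.transpose.postRun T w = { q | M.run q w.reverse ∈ T } := by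
  induction w generalizing T with
  | nil => rfl
  | cons a w ih =>
    have h : M.toNAut.transpose.postRun T (a :: w) =
        { q | M.run q w.reverse ∈ { q | M.step q a ∈ T } } := by
      rw [← toNAut_transpose_post]
      exact ih _
    rw [h, List.reverse_cons]
    simp only [run_append]
    rfl

theorem residual_determinize_transpose (S : M.toNAut.transpose.determinize.Q) :
    M.toNAut.transpose.determinize.residual S = { v | M.run M.start v.reverse ∈ S.1 } := by
  ext v
  have hrun := Set.ext_iff.mp (M.toNAut_transpose_postRun S.1 v) M.start
  show (∃ q ∈ (M.toNAut.transpose.determinize.run S v).1, q = M.start) ↔ _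
  rw [NAut.determinize_run_val]
  exact ⟨fun ⟨_, hq, hstart⟩ => hrun.mp (hstart ▸ hq),
    fun hv => ⟨_, hrun.mpr hv, rfl⟩⟩

variable {M}

theorem IsReachable.determinize_transpose_isObservable (hM : M.IsReachable) :
    M.toNAut.transpose.determinize.IsObservable := by
  intro S S' h
  apply Subtype.ext
  ext q
  obtain ⟨u, rfl⟩ := hM q
  have hu := Set.ext_iff.mp h u.reverse
  rwa [residual_determinize_transpose, residual_determinize_transpose, Set.mem_ofPred_eq,
    Set.mem_ofPred_eq, List.reverse_reverse] at hu

end DAut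

theorem brzozowski_accepts {A : Type} (N : NAut A) (w : List A) :
    (brzozowski N).Accepts w ↔ N.Accepts w := by
  rw [brzozowski, NAut.determinize_accepts, NAut.transpose_accepts, DAut.toNAut_accepts,
    NAut.determinize_accepts, NAut.transpose_accepts, List.reverse_reverse]

theorem brzozowski_isReachable {A : Type} (N : NAut A) : (brzozowski N).IsReachable :=
  NAut.determinize_isReachable _

theorem brzozowski_isObservable {A : Type} (N : NAut A) : (brzozowski N).IsObservable :=
  N.transpose.determinize_isReachable.determinize_transpose_isObservable

/-- Correctness of Brzozowski's algorithm: for a nondeterministic automaton `N` accepting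
the language `L`, the resulting deterministic automaton accepts `L`, is reachable and
observable, and is minimal: its states are in bijection with the left quotients of `L`,
compatibly with the initial state, the transitions and acceptance. -/
theorem brzozowski_correct {A : Type} (N : NAut A) (L : Set (List A))
    (hL : ∀ w, N.Accepts w ↔ w ∈ L) :
    (∀ w, (brzozowski N).Accepts w ↔ w ∈ L) ∧
    (∀ q : (brzozowski N).Q, ∃ w, (brzozowski N).run (brzozowski N).start w = q) ∧
    (∀ q q' : (brzozowski N).Q,
      (∀ w, (brzozowski N).final ((brzozowski N).run q w) ↔
            (brzozowski N).final ((brzozowski N).run q' w)) → q = q') ∧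
    ∃ e : (brzozowski N).Q ≃ { K : Set (List A) // ∃ w, K = { v | w ++ v ∈ L } },
      (e (brzozowski N).start).1 = L ∧
      (∀ (q : (brzozowski N).Q) (a : A),
        (e ((brzozowski N).step q a)).1 = { v | a :: v ∈ (e q).1 }) ∧
      (∀ q : (brzozowski N).Q, (brzozowski N).final q ↔ [] ∈ (e q).1) := by
  have hacc (w : List A) : (brzozowski N).Accepts w ↔ w ∈ L :=
    (brzozowski_accepts N w).trans (hL w)
  have hreach := brzozowski_isReachable N
  have hobs := brzozowski_isObservable N
  exact ⟨hacc, hreach, fun q q' h => hobs (Set.ext h),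
    DAut.exists_equiv_leftQuotients hacc hreach hobs⟩
end
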